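/- arXiv:0809.5110 — 4 statements merged into one kernel-verified Lean document; each statement's English description precedes it below -/
import Mathlib

section
/- Let H* be the quasi-shuffle (stuffle) algebra: the free Z-module on words z_{s1}...z_{sk} in letters z_s (s ≥ 1), with product defined recursively by (z_r u) * (z_s v) = z_r (u * (z_s v)) + z_s ((z_r u) * v) + z_{r+s} (u * v) and 1 * u = u * 1 = u. Then for all positive integers k ≥ 2 and n ≥ k: ∑_{r + s1 + ... + s_{k-1} = n, all ≥ 1} z_r * z_{s1,...,s_{k-1}} = k · ∑_{t1+...+tk = n, ti ≥ 1} z_{t1,...,tk} + (n - k + 1) · ∑_{u1+...+u_{k-1} = n, ui ≥ 1} z_{u1,...,u_{k-1}}. -/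
open Finsupp

/-- The free ℤ-module on words `z_{s₁,…,s_k}` (a word is the list of its indices). -/
abbrev QWords : Type := (List ℕ) →₀ ℤ

/-- The word `z_{s₁,…,s_k}` as a basis element. -/
noncomputable def zw (l : List ℕ) : QWords := Finsupp.single l 1

/-- Prepending the letter `z_r`, as a linear operator. -/
noncomputable def zcons (r : ℕ) : QWords →ₗ[ℤ] QWords :=
  Finsupp.lmapDomain ℤ ℤ (List.cons r)

/-!
Write `S(n, k)` (`compSum n k`) for the sum of the words of the compositions of `n` into `k` parts
and `T(n, k)` (`letterMulSum mul n k`) for the sum of `z_r * z_v` over the letters `r ≥ 1` and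
the words `v` with `k` letters of weight `n - r`. We show
`T(n, k) = (k + 1) S(n, k + 1) + (n - k) S(n, k)` by induction on `k`. Splitting `v = z_s v'` and
applying the recursion once gives
`T(n, k + 1) = S(n, k + 2) + ∑_s z_s T(n - s, k) + ∑_t (t - 1) z_t S(n - t, k)`,
since the letter `z_t` arises as `z_{r+s}` for `t - 1` pairs `(r, s)`. By induction the middle term
is `(k + 1) S(n, k + 2) + ∑_t (n - t - k) z_t S(n - t, k)`, and the coefficients of `z_t S(n - t, k)`
add up to `n - k - 1`.
-/

open Finset

theorem zcons_zw (r : ℕ) (l : List ℕ) : zcons r (zw l) = zw (r :: l) := by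
  simp [zcons, zw, Finsupp.mapDomain_single]

def compWords (n k : ℕ) : Finset (List ℕ) :=
  (univ.filter fun c : Composition n => c.length = k).image Composition.blocks

theorem mem_compWords {n k : ℕ} {l : List ℕ} :
    l ∈ compWords n k ↔ (∀ x ∈ l, 0 < x) ∧ l.sum = n ∧ l.length = k := by
  simp only [compWords, mem_image, mem_filter, mem_univ, true_and]
  constructor
  · rintro ⟨c, rfl, rfl⟩
    exact ⟨fun _ => c.blocks_pos, c.blocks_sum, rfl⟩
  · rintro ⟨hpos, hsum, rfl⟩
    exact ⟨⟨l, hpos _, hsum⟩, rfl, rfl⟩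

theorem sum_compWords {M : Type*} [AddCommMonoid M] (n k : ℕ) (f : List ℕ → M) :
    ∑ l ∈ compWords n k, f l =
      ∑ c ∈ univ.filter (fun c : Composition n => c.length = k), f c.blocks :=
  sum_image fun _ _ _ _ h => Composition.ext h

theorem cons_mem_compWords_succ {n k s : ℕ} {v : List ℕ} :
    s :: v ∈ compWords n (k + 1) ↔ s ∈ Icc 1 n ∧ v ∈ compWords (n - s) k := by
  simp only [mem_compWords, List.mem_cons, forall_eq_or_imp, List.sum_cons, List.length_cons,
    mem_Icc]
  constructor
  · rintro ⟨⟨hs, hv⟩, hsum, hlen⟩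
    exact ⟨⟨hs, by omega⟩, hv, by omega, by omega⟩
  · rintro ⟨⟨hs, hsn⟩, hv, hsum, hlen⟩
    exact ⟨⟨hs, hv⟩, by omega, by omega⟩

theorem sum_compWords_succ {M : Type*} [AddCommMonoid M] (n k : ℕ) (f : List ℕ → M) :
    ∑ l ∈ compWords n (k + 1), f l = ∑ s ∈ Icc 1 n, ∑ v ∈ compWords (n - s) k, f (s :: v) := by
  rw [sum_sigma']
  symm
  refine sum_nbij' (fun p => p.1 :: p.2) (fun l => ⟨l.headI, l.tail⟩) ?_ ?_ ?_ ?_ fun _ _ => rfl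
  · rintro ⟨s, v⟩ h
    simpa [cons_mem_compWords_succ] using h
  · rintro (_ | ⟨s, v⟩) h
    · simp [mem_compWords] at h
    · simpa [cons_mem_compWords_succ] using h
  · rintro ⟨s, v⟩ _; rfl
  · rintro (_ | ⟨s, v⟩) h
    · simp [mem_compWords] at h
    · rfl

theorem sum_Icc_sum_Icc_add {M : Type*} [AddCommMonoid M] (n : ℕ) (g : ℕ → M) :
    ∑ r ∈ Icc 1 n, ∑ s ∈ Icc 1 (n - r), g (r + s) = ∑ t ∈ Icc 1 n, (t - 1) • g t := by
  calc _ = ∑ r ∈ Icc 1 n, ∑ t ∈ Icc (r + 1) n, g t := Finset.sum_congr rfl fun r hr => by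
          have hIcc : Icc (r + 1) n = (Icc 1 (n - r)).map (addLeftEmbedding r) := by
            rw [map_add_left_Icc, Nat.add_sub_cancel' (mem_Icc.1 hr).2]
          rw [hIcc, sum_map]
          rfl
    _ = ∑ t ∈ Icc 1 n, ∑ r ∈ Ico 1 t, g t :=
          Finset.sum_comm' fun r t => by simp only [mem_Icc, mem_Ico]; omega
    _ = _ := by simp

def QuasiShuffleRecursion (mul : QWords →ₗ[ℤ] QWords →ₗ[ℤ] QWords) : Prop :=
  ∀ (r s : ℕ) (u v : List ℕ), 1 ≤ r → 1 ≤ s → (∀ x ∈ u, 1 ≤ x) → (∀ x ∈ v, 1 ≤ x) →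
    mul (zw (r :: u)) (zw (s :: v)) =
      zcons r (mul (zw u) (zw (s :: v))) + zcons s (mul (zw (r :: u)) (zw v)) +
        zcons (r + s) (mul (zw u) (zw v))

noncomputable def compSum (n k : ℕ) : QWords := ∑ l ∈ compWords n k, zw l

theorem compSum_succ (n k : ℕ) :
    compSum n (k + 1) = ∑ s ∈ Icc 1 n, zcons s (compSum (n - s) k) := by
  simp only [compSum, sum_compWords_succ, map_sum, zcons_zw]

theorem natCast_smul_compSum_zero (n : ℕ) : (n : ℤ) • compSum n 0 = 0 := by
  rw [compSum, Finset.smul_sum]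
  refine sum_eq_zero fun l hl => ?_
  obtain ⟨-, rfl, hlen⟩ := mem_compWords.1 hl
  simp [List.length_eq_zero_iff.1 hlen]

noncomputable def letterMulSum (mul : QWords →ₗ[ℤ] QWords →ₗ[ℤ] QWords) (n k : ℕ) : QWords :=
  ∑ r ∈ Icc 1 n, ∑ v ∈ compWords (n - r) k, mul (zw [r]) (zw v)

section

variable {mul : QWords →ₗ[ℤ] QWords →ₗ[ℤ] QWords}

theorem mul_zw_singleton_cons (hunitl : ∀ w : QWords, mul (zw []) w = w)
    (hrec : QuasiShuffleRecursion mul) {r s : ℕ} {v : List ℕ} (hr : 1 ≤ r) (hs : 1 ≤ s)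
    (hv : ∀ x ∈ v, 1 ≤ x) :
    mul (zw [r]) (zw (s :: v)) =
      zw (r :: s :: v) + zcons s (mul (zw [r]) (zw v)) + zw ((r + s) :: v) := by
  rw [hrec r s [] v hr hs (by simp) hv, hunitl, hunitl, zcons_zw, zcons_zw]

theorem letterMulSum_zero (hunitr : ∀ w : QWords, mul w (zw []) = w) (n : ℕ) :
    letterMulSum mul n 0 = compSum n 1 := by
  rw [compSum, sum_compWords_succ]
  refine Finset.sum_congr rfl fun r _ => Finset.sum_congr rfl fun v hv => ?_
  rw [List.length_eq_zero_iff.1 (mem_compWords.1 hv).2.2, hunitr]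

theorem letterMulSum_succ (hunitl : ∀ w : QWords, mul (zw []) w = w)
    (hrec : QuasiShuffleRecursion mul) (n k : ℕ) :
    letterMulSum mul n (k + 1) = compSum n (k + 2) +
      ∑ s ∈ Icc 1 n, zcons s (letterMulSum mul (n - s) k) +
      ∑ t ∈ Icc 1 n, (t - 1) • zcons t (compSum (n - t) k) := by
  have hrec_sum : letterMulSum mul n (k + 1) =
      ∑ r ∈ Icc 1 n, ∑ s ∈ Icc 1 (n - r), ∑ v ∈ compWords (n - r - s) k,
        (zw (r :: s :: v) + zcons s (mul (zw [r]) (zw v)) + zw ((r + s) :: v)) := by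
    refine Finset.sum_congr rfl fun r hr => ?_
    rw [sum_compWords_succ]
    refine Finset.sum_congr rfl fun s hs => Finset.sum_congr rfl fun v hv => ?_
    exact mul_zw_singleton_cons hunitl hrec (mem_Icc.1 hr).1 (mem_Icc.1 hs).1
      (mem_compWords.1 hv).1
  have hcons : ∑ r ∈ Icc 1 n, ∑ s ∈ Icc 1 (n - r), ∑ v ∈ compWords (n - r - s) k,
      zw (r :: s :: v) = compSum n (k + 2) := by
    rw [compSum, sum_compWords_succ n (k + 1)]
    exact Finset.sum_congr rfl fun r _ =>
      (sum_compWords_succ (n - r) k fun v => zw (r :: v)).symm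
  have hswap : ∑ r ∈ Icc 1 n, ∑ s ∈ Icc 1 (n - r), ∑ v ∈ compWords (n - r - s) k,
      zcons s (mul (zw [r]) (zw v)) = ∑ s ∈ Icc 1 n, zcons s (letterMulSum mul (n - s) k) := by
    rw [Finset.sum_comm' (t' := Icc 1 n) (s' := fun s => Icc 1 (n - s))
      fun r s => by simp only [mem_Icc]; omega]
    refine Finset.sum_congr rfl fun s _ => ?_
    rw [letterMulSum, map_sum]
    exact Finset.sum_congr rfl fun r _ => by rw [Nat.sub_right_comm, map_sum]
  have hmerge : ∑ r ∈ Icc 1 n, ∑ s ∈ Icc 1 (n - r), ∑ v ∈ compWords (n - r - s) k,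
      zw ((r + s) :: v) = ∑ t ∈ Icc 1 n, (t - 1) • zcons t (compSum (n - t) k) := by
    rw [← sum_Icc_sum_Icc_add n fun t => zcons t (compSum (n - t) k)]
    refine Finset.sum_congr rfl fun r _ => Finset.sum_congr rfl fun s _ => ?_
    rw [compSum, map_sum, Nat.sub_sub]
    simp only [zcons_zw]
  simp only [hrec_sum, sum_add_distrib, hcons, hswap, hmerge]

theorem letterMulSum_eq (hunitl : ∀ w : QWords, mul (zw []) w = w)
    (hunitr : ∀ w : QWords, mul w (zw []) = w) (hrec : QuasiShuffleRecursion mul) (k : ℕ) :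
    ∀ n : ℕ, letterMulSum mul n k =
      ((k : ℤ) + 1) • compSum n (k + 1) + ((n : ℤ) - k) • compSum n k := by
  induction k with
  | zero =>
    intro n
    rw [letterMulSum_zero hunitr, Nat.cast_zero, sub_zero, natCast_smul_compSum_zero]
    simp
  | succ k ih =>
    intro n
    have hcoef : ∑ s ∈ Icc 1 n, (((n - s : ℕ) : ℤ) - k) • zcons s (compSum (n - s) k) +
        ∑ t ∈ Icc 1 n, (t - 1) • zcons t (compSum (n - t) k) =
          ((n : ℤ) - (k + 1)) • compSum n (k + 1) := by
      rw [compSum_succ, Finset.smul_sum, ← sum_add_distrib]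
      refine Finset.sum_congr rfl fun t ht => ?_
      rw [← Nat.cast_smul_eq_nsmul ℤ, ← add_smul]
      obtain ⟨h1, h2⟩ := mem_Icc.1 ht
      push_cast [Nat.cast_sub h1, Nat.cast_sub h2]
      congr 1
      ring
    simp only [letterMulSum_succ hunitl hrec, ih, map_add, map_zsmul, sum_add_distrib,
      ← Finset.smul_sum, ← compSum_succ]
    rw [add_assoc, add_assoc, hcoef]
    push_cast
    module

end

theorem quasi_shuffle_sum_formula_general
    (mul : QWords →ₗ[ℤ] QWords →ₗ[ℤ] QWords)
    (hunitl : ∀ w : QWords, mul (zw []) w = w)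
    (hunitr : ∀ w : QWords, mul w (zw []) = w)
    (hrec : ∀ (r s : ℕ) (u v : List ℕ), 1 ≤ r → 1 ≤ s →
      (∀ x ∈ u, 1 ≤ x) → (∀ x ∈ v, 1 ≤ x) →
      mul (zw (r :: u)) (zw (s :: v)) =
        zcons r (mul (zw u) (zw (s :: v))) + zcons s (mul (zw (r :: u)) (zw v)) +
          zcons (r + s) (mul (zw u) (zw v)))
    (k n : ℕ) (hk : 2 ≤ k) :
    ∑ c ∈ Finset.univ.filter (fun c : Composition n => c.length = k),
        mul (zw [c.blocks.headI]) (zw c.blocks.tail)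
      = (k : ℤ) • (∑ c ∈ Finset.univ.filter (fun c : Composition n => c.length = k),
            zw c.blocks)
        + ((n : ℤ) - k + 1) •
            (∑ c ∈ Finset.univ.filter (fun c : Composition n => c.length = k - 1),
              zw c.blocks) := by
  obtain ⟨j, rfl⟩ : ∃ j, k = j + 1 := ⟨k - 1, by omega⟩
  rw [← sum_compWords n (j + 1) fun l => mul (zw [l.headI]) (zw l.tail), sum_compWords_succ,
    ← sum_compWords, ← sum_compWords, Nat.add_sub_cancel]
  simp only [List.headI_cons, List.tail_cons]
  rw [← letterMulSum, letterMulSum_eq hunitl hunitr hrec, compSum, compSum]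
  push_cast
  module

/-- Sum formula for the quasi-shuffle product: for `k ≥ 2`, `n ≥ k`,
`∑_{r+s₁+⋯+s_{k-1}=n, all ≥ 1} z_r * z_{s₁,…,s_{k-1}}
  = k ∑_{t₁+⋯+t_k=n} z_{t₁,…,t_k} + (n-k+1) ∑_{u₁+⋯+u_{k-1}=n} z_{u₁,…,u_{k-1}}`. -/
theorem quasi_shuffle_sum_formula
    (mul : QWords →ₗ[ℤ] QWords →ₗ[ℤ] QWords)
    (hunitl : ∀ w : QWords, mul (zw []) w = w)
    (hunitr : ∀ w : QWords, mul w (zw []) = w)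
    (hrec : ∀ (r s : ℕ) (u v : List ℕ), 1 ≤ r → 1 ≤ s →
      (∀ x ∈ u, 1 ≤ x) → (∀ x ∈ v, 1 ≤ x) →
      mul (zw (r :: u)) (zw (s :: v)) =
        zcons r (mul (zw u) (zw (s :: v))) + zcons s (mul (zw (r :: u)) (zw v)) +
          zcons (r + s) (mul (zw u) (zw v)))
    (k n : ℕ) (hk : 2 ≤ k) (hn : k ≤ n) :
    ∑ c ∈ Finset.univ.filter (fun c : Composition n => c.length = k),
        mul (zw [c.blocks.headI]) (zw c.blocks.tail)
      = (k : ℤ) • (∑ c ∈ Finset.univ.filter (fun c : Composition n => c.length = k),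
            zw c.blocks)
        + ((n : ℤ) - k + 1) •
            (∑ c ∈ Finset.univ.filter (fun c : Composition n => c.length = k - 1),
              zw c.blocks) :=
  quasi_shuffle_sum_formula_general mul hunitl hunitr hrec k n hk
end

section
/- With the quasi-shuffle algebra as above, for positive integers k ≥ 2 and n ≥ k+1: ∑_{r ≥ 1, s1 ≥ 2, s2,...,s_{k-1} ≥ 1, r + s1 + ... + s_{k-1} = n} z_r * z_{s1,...,s_{k-1}} equals ∑_{t1 = 1, t2 ≥ 2, ti ≥ 1, ∑ti = n} z_{t1,...,tk} + (k-1) ∑_{t1 ≥ 2, t2 = 1, ti ≥ 1, ∑ti = n} z_{t1,...,tk} + k ∑_{t1 ≥ 2, t2 ≥ 2, ti ≥ 1, ∑ti = n} z_{t1,...,tk} + (n-k) ∑_{u1 ≥ 2, ui ≥ 1, u1+...+u_{k-1} = n} z_{u1,...,u_{k-1}}. -/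
open Finsupp

/-!
Multiplying by a single letter, `z_r * z_v` is the sum of the `k` words obtained by inserting
`r` into `v` and the `k - 1` words obtained by adding `r` to one entry of `v`. Summed over all
admissible `(r, v)`, a word `t` of length `k` arises by insertion once for each position
whose removal leaves an admissible word, i.e. `[t₂ ≥ 2] + (k - 1)[t₁ ≥ 2]` times, and an
admissible word `u` of length `k - 1` arises by contraction once for each splitting
`u_j = r + s` with `r ≥ 1` and `s ≥ 1` (`s ≥ 2` when `j = 0`), that is
`∑ (u_j - 1) - 1 = n - k` times.
Both counts come from explicit bijections between index sets.
-/

open Finset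

namespace List

variable {α : Type*}

theorem tail_insertIdx_headI_perm [Inhabited α] {l : List α} {i : ℕ} (hi : i < l.length) :
    (l.tail.insertIdx i l.headI).Perm l := by
  cases l with
  | nil => simp at hi
  | cons a w => exact perm_insertIdx a w (by simpa [Nat.lt_succ_iff] using hi)

theorem getD_cons_eraseIdx_perm {l : List α} {i : ℕ} (d : α) (hi : i < l.length) :
    (l.getD i d :: l.eraseIdx i).Perm l := by
  rw [getD_eq_getElem _ _ hi]
  exact getElem_cons_eraseIdx_perm hi

theorem getD_set_self_of_lt {l : List α} {j : ℕ} (x d : α) (hj : j < l.length) :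
    (l.set j x).getD j d = x := by
  simp [hj]

theorem set_getD_self (l : List α) (j : ℕ) (d : α) : l.set j (l.getD j d) = l := by
  rcases lt_or_ge j l.length with hj | hj
  · rw [getD_eq_getElem _ _ hj, set_getElem_self]
  · exact set_eq_of_length_le hj

theorem sum_set_add_getD {M : Type*} [AddCommMonoid M] {l : List M} {j : ℕ} (x : M)
    (hj : j < l.length) : (l.set j x).sum + l.getD j 0 = l.sum + x := by
  have := (getD_set_perm_cons l j x).sum_eq
  rw [sum_cons, sum_cons, getElem?_eq_getElem hj, Option.getD_some] at this
  rw [getD_eq_getElem _ _ hj, add_comm, this, add_comm]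

theorem sum_range_getD_sub_one_add_length {l : List ℕ} (hpos : ∀ x ∈ l, 0 < x) :
    ∑ j ∈ Finset.range l.length, (l.getD j 0 - 1) + l.length = l.sum := by
  induction l with
  | nil => simp
  | cons a l ih =>
    have ha := hpos a mem_cons_self
    have := ih fun x hx => hpos x (mem_cons_of_mem a hx)
    rw [length_cons, Finset.sum_range_succ']
    simp only [getD_cons_succ, getD_cons_zero, sum_cons]
    omega

end List

def compositionBlocks (n : ℕ) : Finset (List ℕ) :=
  (univ : Finset (Composition n)).map ⟨Composition.blocks, fun _ _ => Composition.ext⟩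

theorem mem_compositionBlocks {n : ℕ} {l : List ℕ} :
    l ∈ compositionBlocks n ↔ (∀ x ∈ l, 0 < x) ∧ l.sum = n := by
  simp only [compositionBlocks, mem_map, mem_univ, true_and]
  constructor
  · rintro ⟨c, rfl⟩
    exact ⟨fun _ => c.blocks_pos, c.blocks_sum⟩
  · rintro ⟨hpos, hsum⟩
    exact ⟨⟨l, hpos _, hsum⟩, rfl⟩

theorem List.Perm.mem_compositionBlocks_iff {n : ℕ} {l l' : List ℕ} (h : l.Perm l') :
    l ∈ compositionBlocks n ↔ l' ∈ compositionBlocks n := by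
  simp only [mem_compositionBlocks, h.mem_iff, h.sum_eq]

theorem sum_filter_compositionBlocks {M : Type*} [AddCommMonoid M] (n : ℕ) (q : List ℕ → Prop)
    [DecidablePred q] (f : List ℕ → M) :
    ∑ l ∈ (compositionBlocks n).filter q, f l =
      ∑ c ∈ univ.filter (fun c : Composition n => q c.blocks), f c.blocks := by
  rw [compositionBlocks, filter_map, sum_map]
  rfl

section Counting

variable {M : Type*}

theorem sum_sum_insertIdx_eq_sum_card_smul [AddCommMonoid M] (n k : ℕ) (f : List ℕ → M) :
    ∑ l ∈ (compositionBlocks n).filter (fun l => l.length = k ∧ 2 ≤ l.tail.headI),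
        ∑ i ∈ range k, f (l.tail.insertIdx i l.headI) =
      ∑ t ∈ (compositionBlocks n).filter (·.length = k),
        #{i ∈ range k | 2 ≤ (t.eraseIdx i).headI} • f t := by
  simp only [← sum_const, sum_sigma']
  refine sum_nbij' (fun p => ⟨p.1.tail.insertIdx p.2 p.1.headI, p.2⟩)
    (fun q => ⟨q.1.getD q.2 0 :: q.1.eraseIdx q.2, q.2⟩) ?_ ?_ ?_ ?_ (fun _ _ => rfl)
  · rintro ⟨l, i⟩ h
    simp only [mem_sigma, mem_filter, mem_range] at h ⊢
    obtain ⟨⟨hl, rfl, h2⟩, hi⟩ := h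
    have hperm := List.tail_insertIdx_headI_perm hi
    refine ⟨⟨hperm.mem_compositionBlocks_iff.2 hl, hperm.length_eq⟩, hi, ?_⟩
    rwa [List.eraseIdx_insertIdx_self]
  · rintro ⟨t, i⟩ h
    simp only [mem_sigma, mem_filter, mem_range] at h ⊢
    obtain ⟨⟨ht, rfl⟩, hi, h2⟩ := h
    have hperm := List.getD_cons_eraseIdx_perm 0 hi
    exact ⟨⟨hperm.mem_compositionBlocks_iff.2 ht, hperm.length_eq, h2⟩, hi⟩
  · rintro ⟨l, i⟩ h
    simp only [mem_sigma, mem_filter, mem_range] at h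
    obtain ⟨⟨-, rfl, -⟩, hi⟩ := h
    cases l with
    | nil => simp at hi
    | cons a w =>
      have hi' : i < (w.insertIdx i a).length := by
        rw [List.length_insertIdx_of_le_length (by simpa [Nat.lt_succ_iff] using hi)]
        simpa using hi
      dsimp only [List.tail_cons, List.headI_cons]
      rw [List.getD_eq_getElem _ _ hi', List.getElem_insertIdx_self, List.eraseIdx_insertIdx_self]
  · rintro ⟨t, i⟩ h
    simp only [mem_sigma, mem_filter, mem_range] at h
    obtain ⟨⟨-, rfl⟩, hi, -⟩ := h
    dsimp only [List.tail_cons, List.headI_cons]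
    rw [List.getD_eq_getElem _ _ hi, List.insertIdx_eraseIdx_getElem hi]

theorem card_filter_two_le_headI_eraseIdx (a : ℕ) (w : List ℕ) :
    #{i ∈ range (a :: w).length | 2 ≤ ((a :: w).eraseIdx i).headI} =
      (if 2 ≤ w.headI then 1 else 0) + if 2 ≤ a then w.length else 0 := by
  rw [card_filter, List.length_cons, sum_range_succ', add_comm]
  by_cases ha : 2 ≤ a <;> simp [ha]

theorem sum_card_filter_smul_eq [AddCommGroup M] (n k : ℕ) (hk : 2 ≤ k)
    (f : List ℕ → M) :
    ∑ t ∈ (compositionBlocks n).filter (·.length = k),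
        #{i ∈ range k | 2 ≤ (t.eraseIdx i).headI} • f t =
      ∑ t ∈ (compositionBlocks n).filter
          (fun t => t.length = k ∧ t.headI = 1 ∧ 2 ≤ t.tail.headI), f t
        + ((k : ℤ) - 1) • ∑ t ∈ (compositionBlocks n).filter
          (fun t => t.length = k ∧ 2 ≤ t.headI ∧ t.tail.headI = 1), f t
        + (k : ℤ) • ∑ t ∈ (compositionBlocks n).filter
          (fun t => t.length = k ∧ 2 ≤ t.headI ∧ 2 ≤ t.tail.headI), f t := by
  simp only [sum_filter, Finset.smul_sum, ← sum_add_distrib]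
  refine sum_congr rfl fun t ht => ?_
  by_cases hlen : t.length = k
  · rcases t with _ | ⟨a, _ | ⟨b, w⟩⟩
    · simp at hlen; omega
    · simp at hlen; omega
    obtain ⟨hpos, -⟩ := mem_compositionBlocks.1 ht
    have ha : 0 < a := hpos a (by simp)
    have hb : 0 < b := hpos b (by simp)
    subst hlen
    rw [card_filter_two_le_headI_eraseIdx]
    simp only [List.headI_cons, List.tail_cons, true_and, if_true]
    have ha1 : a = 1 ∨ 2 ≤ a ∧ a ≠ 1 := by omega
    have hb1 : b = 1 ∨ 2 ≤ b ∧ b ≠ 1 := by omega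
    rcases ha1 with rfl | ⟨ha2, ha1⟩ <;> rcases hb1 with rfl | ⟨hb2, hb1⟩ <;>
      simp [*, ← natCast_zsmul, add_smul, add_comm]
  · simp [hlen]

def IsAdmissible (v : List ℕ) : Prop := (∀ x ∈ v, 0 < x) ∧ 2 ≤ v.headI

theorem IsAdmissible.le_getD {v : List ℕ} (hv : IsAdmissible v) {j : ℕ} (hj : j < v.length) :
    (if j = 0 then 2 else 1) ≤ v.getD j 0 := by
  rcases v with _ | ⟨a, v⟩
  · simp at hj
  rcases j with _ | j
  · simpa using hv.2
  · have hj' : j < v.length := Nat.lt_of_succ_lt_succ hj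
    rw [if_neg j.succ_ne_zero, List.getD_cons_succ, List.getD_eq_getElem _ _ hj']
    exact hv.1 _ (List.mem_cons_of_mem a (List.getElem_mem hj'))

theorem IsAdmissible.set {v : List ℕ} (hv : IsAdmissible v) {j x : ℕ} (hx : 0 < x)
    (hx₀ : j = 0 → 2 ≤ x) : IsAdmissible (v.set j x) := by
  refine ⟨fun y hy => ?_, ?_⟩
  · rcases List.mem_or_eq_of_mem_set hy with hy | rfl
    exacts [hv.1 y hy, hx]
  · have h2 := hv.2
    rcases v with _ | ⟨a, v⟩ <;> rcases j with _ | j <;> simp_all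

-- The splittings `u_j = r + s` with `r ≥ 1`, `s ≥ 1`, and `s ≥ 2` when `j = 0`.
def contractionFiber (u : List ℕ) : Finset (Σ _ : ℕ, ℕ) :=
  (range u.length).sigma fun j => Icc 1 (u.getD j 0 - if j = 0 then 2 else 1)

theorem mem_contractionFiber {u : List ℕ} {j r : ℕ} :
    ⟨j, r⟩ ∈ contractionFiber u ↔
      j < u.length ∧ 0 < r ∧ r + (if j = 0 then 2 else 1) ≤ u.getD j 0 := by
  simp only [contractionFiber, mem_sigma, mem_range, mem_Icc]
  split_ifs <;> omega

theorem card_contractionFiber {u : List ℕ} (hu : IsAdmissible u) :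
    #(contractionFiber u) = u.sum - u.length - 1 := by
  obtain ⟨hpos, h2⟩ := hu
  rcases u with _ | ⟨a, w⟩
  · simp at h2
  have := List.sum_range_getD_sub_one_add_length fun x hx => hpos x (List.mem_cons_of_mem a hx)
  rw [List.headI_cons] at h2
  rw [contractionFiber, card_sigma, List.length_cons, sum_range_succ']
  simp only [Nat.card_Icc, List.getD_cons_succ, List.getD_cons_zero, List.sum_cons,
    add_tsub_cancel_right, Nat.add_eq_zero_iff, one_ne_zero, and_false, if_false, if_true]
  omega

theorem IsAdmissible.set_add_getD {v : List ℕ} (hv : IsAdmissible v) {j r : ℕ} (hr : 0 < r)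
    (hj : j < v.length) :
    IsAdmissible (v.set j (r + v.getD j 0)) ∧
      ⟨j, r⟩ ∈ contractionFiber (v.set j (r + v.getD j 0)) := by
  have hδ := hv.le_getD hj
  refine ⟨hv.set (by omega) fun hj0 => by simp only [hj0, if_true] at hδ ⊢; omega, ?_⟩
  rw [mem_contractionFiber, List.getD_set_self_of_lt _ _ hj, List.length_set]
  exact ⟨hj, hr, by omega⟩

theorem IsAdmissible.set_getD_sub {u : List ℕ} (hu : IsAdmissible u) {j r : ℕ}
    (h : ⟨j, r⟩ ∈ contractionFiber u) : IsAdmissible (u.set j (u.getD j 0 - r)) := by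
  obtain ⟨-, -, hr⟩ := mem_contractionFiber.1 h
  exact hu.set (by split_ifs at hr <;> omega) fun hj0 => by
    simp only [hj0, if_true] at hr ⊢; omega

theorem sum_sum_set_eq_sum_card_smul [AddCommMonoid M] (n k : ℕ) (f : List ℕ → M) :
    ∑ l ∈ (compositionBlocks n).filter (fun l => l.length = k ∧ 2 ≤ l.tail.headI),
        ∑ j ∈ range (k - 1), f (l.tail.set j (l.headI + l.tail.getD j 0)) =
      ∑ u ∈ (compositionBlocks n).filter (fun u => u.length = k - 1 ∧ 2 ≤ u.headI),
        #(contractionFiber u) • f u := by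
  simp only [← sum_const, sum_sigma']
  refine sum_nbij'
    (fun p => ⟨p.1.tail.set p.2 (p.1.headI + p.1.tail.getD p.2 0), p.2, p.1.headI⟩)
    (fun q => ⟨q.2.2 :: q.1.set q.2.1 (q.1.getD q.2.1 0 - q.2.2), q.2.1⟩) ?_ ?_ ?_ ?_
    (fun _ _ => rfl)
  · rintro ⟨_ | ⟨r, v⟩, j⟩ h
    · simp at h
    simp only [mem_sigma, mem_filter, mem_range, mem_compositionBlocks, List.headI_cons,
      List.tail_cons, List.length_cons, List.forall_mem_cons, List.sum_cons] at h ⊢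
    obtain ⟨⟨⟨⟨hr, hv⟩, hsum⟩, rfl, h2⟩, hj⟩ := h
    have hjv : j < v.length := by omega
    obtain ⟨hu, hfib⟩ := IsAdmissible.set_add_getD ⟨hv, h2⟩ hr hjv
    have := List.sum_set_add_getD (r + v.getD j 0) hjv
    exact ⟨⟨⟨hu.1, by omega⟩, by simp, hu.2⟩, hfib⟩
  · rintro ⟨u, j, r⟩ h
    simp only [mem_sigma, mem_filter, mem_range, mem_compositionBlocks, List.tail_cons,
      List.length_cons, List.forall_mem_cons, List.sum_cons] at h ⊢
    obtain ⟨⟨⟨hpos, rfl⟩, hlen, h2⟩, h⟩ := h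
    have hv := IsAdmissible.set_getD_sub ⟨hpos, h2⟩ h
    obtain ⟨hj, hr, hru⟩ := mem_contractionFiber.1 h
    have := List.sum_set_add_getD (u.getD j 0 - r) hj
    have hlen' : (u.set j (u.getD j 0 - r)).length + 1 = k := by
      rw [List.length_set]; omega
    refine ⟨⟨⟨⟨hr, hv.1⟩, ?_⟩, hlen', hv.2⟩, by omega⟩
    split_ifs at hru <;> omega
  · rintro ⟨_ | ⟨r, v⟩, j⟩ h
    · simp at h
    simp only [mem_sigma, mem_filter, mem_range, List.length_cons] at h
    have hjv : j < v.length := by omega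
    dsimp only [List.headI_cons, List.tail_cons]
    rw [List.getD_set_self_of_lt _ _ hjv, Nat.add_sub_cancel_left, List.set_set,
      List.set_getD_self]
  · rintro ⟨u, j, r⟩ h
    obtain ⟨hj, -, hr⟩ := mem_contractionFiber.1 (mem_sigma.1 h).2
    dsimp only at hj hr
    have hr : r + (u.getD j 0 - r) = u.getD j 0 := by split_ifs at hr <;> omega
    dsimp only [List.headI_cons, List.tail_cons]
    rw [List.getD_set_self_of_lt _ _ hj, hr, List.set_set, List.set_getD_self]

theorem sum_sum_set_eq [AddCommMonoid M] (n k : ℕ) (f : List ℕ → M) :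
    ∑ l ∈ (compositionBlocks n).filter (fun l => l.length = k ∧ 2 ≤ l.tail.headI),
        ∑ j ∈ range (k - 1), f (l.tail.set j (l.headI + l.tail.getD j 0)) =
      ∑ u ∈ (compositionBlocks n).filter (fun u => u.length = k - 1 ∧ 2 ≤ u.headI),
        (n - k) • f u := by
  rw [sum_sum_set_eq_sum_card_smul]
  refine sum_congr rfl fun u hu => congrArg (· • f u) ?_
  simp only [mem_filter, mem_compositionBlocks] at hu
  obtain ⟨⟨hpos, rfl⟩, hlen, h2⟩ := hu
  have hne : u ≠ [] := by rintro rfl; simp at h2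
  have := List.length_pos_iff.2 hne
  rw [card_contractionFiber ⟨hpos, h2⟩]
  omega

end Counting

theorem mul_zw_singleton (mul : QWords →ₗ[ℤ] QWords →ₗ[ℤ] QWords)
    (hunitl : ∀ w : QWords, mul (zw []) w = w)
    (hunitr : ∀ w : QWords, mul w (zw []) = w)
    (hrec : ∀ (r s : ℕ) (u v : List ℕ), 1 ≤ r → 1 ≤ s →
      (∀ x ∈ u, 1 ≤ x) → (∀ x ∈ v, 1 ≤ x) →
      mul (zw (r :: u)) (zw (s :: v)) =
        zcons r (mul (zw u) (zw (s :: v))) + zcons s (mul (zw (r :: u)) (zw v)) +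
          zcons (r + s) (mul (zw u) (zw v)))
    {r : ℕ} (hr : 1 ≤ r) :
    ∀ {v : List ℕ}, (∀ x ∈ v, 1 ≤ x) →
      mul (zw [r]) (zw v) =
        ∑ i ∈ range (v.length + 1), zw (v.insertIdx i r) +
          ∑ j ∈ range v.length, zw (v.set j (r + v.getD j 0))
  | [], _ => by simp [hunitr]
  | s :: v, hv => by
    have hv' : ∀ x ∈ v, 1 ≤ x := fun x hx => hv x (List.mem_cons_of_mem _ hx)
    rw [hrec r s [] v hr (hv s List.mem_cons_self) (by simp) hv', hunitl, hunitl,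
      mul_zw_singleton mul hunitl hunitr hrec hr hv', map_add, map_sum, map_sum,
      List.length_cons, sum_range_succ' (fun i => zw ((s :: v).insertIdx i r)),
      sum_range_succ' (fun j => zw ((s :: v).set j (r + (s :: v).getD j 0)))]
    simp only [zcons_zw, List.insertIdx_succ_cons, List.insertIdx_zero, List.set_cons_succ,
      List.set_cons_zero, List.getD_cons_succ, List.getD_cons_zero]
    abel

theorem sum_mul_zw_headI_tail_eq (mul : QWords →ₗ[ℤ] QWords →ₗ[ℤ] QWords)
    (hunitl : ∀ w : QWords, mul (zw []) w = w)
    (hunitr : ∀ w : QWords, mul w (zw []) = w)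
    (hrec : ∀ (r s : ℕ) (u v : List ℕ), 1 ≤ r → 1 ≤ s →
      (∀ x ∈ u, 1 ≤ x) → (∀ x ∈ v, 1 ≤ x) →
      mul (zw (r :: u)) (zw (s :: v)) =
        zcons r (mul (zw u) (zw (s :: v))) + zcons s (mul (zw (r :: u)) (zw v)) +
          zcons (r + s) (mul (zw u) (zw v)))
    (k n : ℕ) (hk : 2 ≤ k) (hn : k ≤ n) :
    ∑ l ∈ (compositionBlocks n).filter (fun l => l.length = k ∧ 2 ≤ l.tail.headI),
        mul (zw [l.headI]) (zw l.tail)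
      = ∑ t ∈ (compositionBlocks n).filter
            (fun t => t.length = k ∧ t.headI = 1 ∧ 2 ≤ t.tail.headI), zw t
        + ((k : ℤ) - 1) • ∑ t ∈ (compositionBlocks n).filter
            (fun t => t.length = k ∧ 2 ≤ t.headI ∧ t.tail.headI = 1), zw t
        + (k : ℤ) • ∑ t ∈ (compositionBlocks n).filter
            (fun t => t.length = k ∧ 2 ≤ t.headI ∧ 2 ≤ t.tail.headI), zw t
        + ((n : ℤ) - k) • ∑ u ∈ (compositionBlocks n).filter
            (fun u => u.length = k - 1 ∧ 2 ≤ u.headI), zw u := by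
  have hexpand :
      ∀ l ∈ (compositionBlocks n).filter (fun l => l.length = k ∧ 2 ≤ l.tail.headI),
      mul (zw [l.headI]) (zw l.tail) =
        ∑ i ∈ range k, zw (l.tail.insertIdx i l.headI) +
          ∑ j ∈ range (k - 1), zw (l.tail.set j (l.headI + l.tail.getD j 0)) := by
    intro l hl
    simp only [mem_filter, mem_compositionBlocks] at hl
    obtain ⟨⟨hpos, -⟩, rfl, h2⟩ := hl
    rcases l with _ | ⟨r, v⟩
    · simp at h2
    simp only [List.headI_cons, List.tail_cons, List.length_cons, Nat.add_sub_cancel]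
    exact mul_zw_singleton mul hunitl hunitr hrec (hpos r List.mem_cons_self)
      fun x hx => hpos x (List.mem_cons_of_mem r hx)
  rw [sum_congr rfl hexpand, sum_add_distrib, sum_sum_insertIdx_eq_sum_card_smul,
    sum_card_filter_smul_eq n k hk, sum_sum_set_eq, ← Finset.smul_sum, ← natCast_zsmul,
    Nat.cast_sub hn]

/-- Admissible sum formula for the quasi-shuffle product, `k ≥ 2`,
`n ≥ k+1`. -/
theorem quasi_shuffle_sum_formula_admissible
    (mul : QWords →ₗ[ℤ] QWords →ₗ[ℤ] QWords)
    (hunitl : ∀ w : QWords, mul (zw []) w = w)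
    (hunitr : ∀ w : QWords, mul w (zw []) = w)
    (hrec : ∀ (r s : ℕ) (u v : List ℕ), 1 ≤ r → 1 ≤ s →
      (∀ x ∈ u, 1 ≤ x) → (∀ x ∈ v, 1 ≤ x) →
      mul (zw (r :: u)) (zw (s :: v)) =
        zcons r (mul (zw u) (zw (s :: v))) + zcons s (mul (zw (r :: u)) (zw v)) +
          zcons (r + s) (mul (zw u) (zw v)))
    (k n : ℕ) (hk : 2 ≤ k) (hn : k + 1 ≤ n) :
    ∑ c ∈ Finset.univ.filter
        (fun c : Composition n => c.length = k ∧ 2 ≤ c.blocks.tail.headI),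
        mul (zw [c.blocks.headI]) (zw c.blocks.tail)
      = (∑ c ∈ Finset.univ.filter (fun c : Composition n =>
            c.length = k ∧ c.blocks.headI = 1 ∧ 2 ≤ c.blocks.tail.headI), zw c.blocks)
        + ((k : ℤ) - 1) • (∑ c ∈ Finset.univ.filter (fun c : Composition n =>
            c.length = k ∧ 2 ≤ c.blocks.headI ∧ c.blocks.tail.headI = 1), zw c.blocks)
        + (k : ℤ) • (∑ c ∈ Finset.univ.filter (fun c : Composition n =>
            c.length = k ∧ 2 ≤ c.blocks.headI ∧ 2 ≤ c.blocks.tail.headI), zw c.blocks)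
        + ((n : ℤ) - k) • (∑ c ∈ Finset.univ.filter (fun c : Composition n =>
            c.length = k - 1 ∧ 2 ≤ c.blocks.headI), zw c.blocks) := by
  have h := sum_mul_zw_headI_tail_eq mul hunitl hunitr hrec k n hk (by omega)
  simp only [sum_filter_compositionBlocks] at h
  exact h
end

section
/- Let H⧢ be the shuffle algebra: the free Z-module on words in two letters x0, x1, with shuffle product defined by (a u) ⧢ (b v) = a (u ⧢ (b v)) + b ((a u) ⧢ v) for a, b ∈ {x0, x1} and empty word as unit. Transport ⧢ to words z_{s1,...,sk} (si ≥ 1) via the bijection z_{s1,...,sk} ↔ x0^{s1-1} x1 ··· x0^{sk-1} x1, yielding a product ш on the span of the z-words. Then for positive integers k ≥ 2 and n ≥ k: z_1 ш (∑_{s1+...+s_{k-1} = n-1, si ≥ 1} z_{s1,...,s_{k-1}}) = k ∑_{∑ti = n, ti ≥ 1, tk = 1} z_{t1,...,tk} + (k-1) ∑_{∑ti = n, ti ≥ 1, tk ≥ 2} z_{t1,...,tk}. -/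
/-!
The shuffle of a single letter with a word `w` is the sum of its `|w| + 1` insertions into `w`.
On `z`-words, inserting the letter `x₁ = z₁` into `z_s` either splits a block `z_a` into
`z_{j+1} z_{a-j}` with `j < a`, or appends `z₁` at the end. Hence a word `z_t` with `k` blocks
arises from the words with `k - 1` blocks once for each of its `k - 1` pairs of adjacent blocks,
and once more if `t_k = 1`. Since `encodeWord` is injective on words with positive indices, these
insertions determine `ш`.
-/

open Finsupp

/-- The free ℤ-module on words in the two letters `x₀, x₁`
(`false` plays the role of `x₀` and `true` the role of `x₁`). -/
abbrev XWords : Type := (List Bool) →₀ ℤ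

/-- A word in `x₀, x₁` as a basis element. -/
noncomputable def xw (l : List Bool) : XWords := Finsupp.single l 1

/-- The bijection `z_{s₁,…,s_k} ↔ x₀^{s₁-1} x₁ ⋯ x₀^{s_k-1} x₁` on words. -/
def encodeWord : List ℕ → List Bool
  | [] => []
  | s :: t => List.replicate (s - 1) false ++ true :: encodeWord t

open Finset

theorem insertIdx_length_add_append {α : Type*} (u w : List α) (i : ℕ) (a : α) :
    (u ++ w).insertIdx (u.length + i) a = u ++ w.insertIdx i a := by
  induction u with
  | nil => simp
  | cons b u ih =>
    rw [List.length_cons, Nat.add_right_comm, List.cons_append, List.insertIdx_succ_cons, ih,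
      List.cons_append]

theorem insertIdx_replicate_append {α : Type*} (b c : α) (w : List α) :
    ∀ {i m : ℕ}, i ≤ m → (List.replicate m b ++ w).insertIdx i c =
      List.replicate i b ++ c :: (List.replicate (m - i) b ++ w)
  | 0, m, _ => by simp
  | i + 1, m + 1, h => by
    rw [List.replicate_succ, List.cons_append, List.insertIdx_succ_cons,
      insertIdx_replicate_append b c w (by omega), Nat.add_sub_add_right, List.replicate_succ,
      List.cons_append]

theorem shuffle_singleton_left (sh : XWords →ₗ[ℤ] XWords →ₗ[ℤ] XWords)
    (hsunitl : ∀ w : XWords, sh (xw []) w = w)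
    (hsunitr : ∀ w : XWords, sh w (xw []) = w)
    (hsrec : ∀ (a b : Bool) (u v : List Bool),
      sh (xw (a :: u)) (xw (b :: v)) =
        Finsupp.mapDomain (List.cons a) (sh (xw u) (xw (b :: v))) +
          Finsupp.mapDomain (List.cons b) (sh (xw (a :: u)) (xw v)))
    (a : Bool) (w : List Bool) :
    sh (xw [a]) (xw w) = ∑ i ∈ range (w.length + 1), xw (w.insertIdx i a) := by
  induction w with
  | nil => simp [hsunitr]
  | cons b v ih =>
    rw [hsrec a b [] v, hsunitl, ih, mapDomain_finsetSum, List.length_cons,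
      sum_range_succ' _ (v.length + 1), add_comm]
    simp only [xw, mapDomain_single, List.insertIdx_succ_cons, List.insertIdx_zero]

def decodeWord : List Bool → List ℕ
  | [] => []
  | true :: w => 1 :: decodeWord w
  | false :: w =>
    match decodeWord w with
    | [] => []
    | a :: t => (a + 1) :: t

theorem decodeWord_replicate_false_append (m : ℕ) (w : List Bool) :
    decodeWord (List.replicate m false ++ true :: w) = (m + 1) :: decodeWord w := by
  induction m with
  | zero => simp [decodeWord]
  | succ m ih => rw [List.replicate_succ, List.cons_append, decodeWord, ih]

theorem decodeWord_encodeWord {s : List ℕ} (hs : ∀ x ∈ s, 1 ≤ x) :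
    decodeWord (encodeWord s) = s := by
  induction s with
  | nil => rfl
  | cons a t ih =>
    rw [encodeWord, decodeWord_replicate_false_append, ih fun x hx => hs x (by simp [hx]),
      Nat.sub_add_cancel (hs a (by simp))]

theorem encodeWord_injOn : Set.InjOn encodeWord {s | ∀ x ∈ s, 1 ≤ x} :=
  Set.LeftInvOn.injOn (f₁' := decodeWord) fun _ hs => decodeWord_encodeWord hs

/-- `z₁ ш z_s`, computed on the first block `x₀^{a-1} x₁` of `s = a :: t`: the letter `x₁` is
inserted inside it, splitting `z_a` into `z_{j+1} z_{a-j}`, or after it. -/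
noncomputable def zOneShuffle : List ℕ → QWords
  | [] => zw [1]
  | a :: t => ∑ j ∈ range a, zw ((j + 1) :: (a - j) :: t) + mapDomain (List.cons a) (zOneShuffle t)

theorem mapDomain_encodeWord_zOneShuffle {s : List ℕ} (hs : ∀ x ∈ s, 1 ≤ x) :
    mapDomain encodeWord (zOneShuffle s) =
      ∑ i ∈ range ((encodeWord s).length + 1), xw ((encodeWord s).insertIdx i true) := by
  induction s with
  | nil => simp [zOneShuffle, zw, xw, encodeWord, mapDomain_single]
  | cons a t ih =>
    obtain ⟨m, rfl⟩ : ∃ m, a = m + 1 := ⟨a - 1, (Nat.sub_add_cancel (hs a (by simp))).symm⟩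
    set e := encodeWord t
    set u := List.replicate m false ++ [true]
    have hu : u.length = m + 1 := by simp [u]
    have henc : encodeWord ((m + 1) :: t) = u ++ e := by simp [u, e, encodeWord]
    have hcomp : encodeWord ∘ List.cons (m + 1) = (u ++ ·) ∘ encodeWord := by
      funext s; simp [u, encodeWord]
    rw [henc, List.length_append, hu, add_assoc, sum_range_add, zOneShuffle, mapDomain_add,
      mapDomain_finsetSum, ← mapDomain_comp, hcomp, mapDomain_comp,
      ih fun x hx => hs x (by simp [hx]), mapDomain_finsetSum]
    congr 1
    · refine sum_congr rfl fun i hi => ?_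
      have hi : i ≤ m := Nat.lt_succ_iff.mp (mem_range.mp hi)
      rw [zw, xw, mapDomain_single, show u ++ e = List.replicate m false ++ true :: e by simp [u],
        insertIdx_replicate_append _ _ _ hi]
      simp [encodeWord, e, show m + 1 - i - 1 = m - i by omega]
    · refine sum_congr rfl fun i _ => ?_
      rw [xw, xw, mapDomain_single, ← hu, insertIdx_length_add_append]

theorem zOneShuffle_mem_supported {s : List ℕ} (hs : ∀ x ∈ s, 1 ≤ x) :
    zOneShuffle s ∈ supported ℤ ℤ {l : List ℕ | ∀ x ∈ l, 1 ≤ x} := by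
  induction s with
  | nil => exact single_mem_supported ℤ 1 (by simp)
  | cons a t ih =>
    have ha : 1 ≤ a := hs a (by simp)
    have ht : ∀ x ∈ t, 1 ≤ x := fun x hx => hs x (by simp [hx])
    refine Submodule.add_mem _ (Submodule.sum_mem _ fun j hj => single_mem_supported ℤ 1 ?_)
      (supported_comap_lmapDomain ℤ ℤ (List.cons a) _ (supported_mono ?_ (ih ht)))
    · have := mem_range.mp hj
      simp only [Set.mem_ofPred_eq, List.mem_cons]
      rintro x (rfl | rfl | hx) <;> first | omega | exact ht x hx
    · rintro l hl x (_ | ⟨_, hx⟩)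
      exacts [ha, hl x hx]

def Composition.blocksEmbedding (n : ℕ) : Composition n ↪ List ℕ :=
  ⟨Composition.blocks, fun _ _ => Composition.ext⟩

def compositionList (n k : ℕ) : Finset (List ℕ) :=
  (univ.filter fun c : Composition n => c.length = k).map (Composition.blocksEmbedding n)

theorem mem_compositionList {n k : ℕ} {l : List ℕ} :
    l ∈ compositionList n k ↔ l.length = k ∧ l.sum = n ∧ ∀ x ∈ l, 1 ≤ x := by
  simp only [compositionList, mem_map, mem_filter, mem_univ, true_and]
  constructor
  · rintro ⟨c, rfl, rfl⟩
    exact ⟨rfl, c.blocks_sum, fun x hx => c.blocks_pos hx⟩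
  · rintro ⟨rfl, rfl, hl⟩
    exact ⟨⟨l, fun hx => hl _ hx, rfl⟩, rfl, rfl⟩

theorem sum_compositionList {M : Type*} [AddCommMonoid M] (f : List ℕ → M) (n k : ℕ) :
    ∑ l ∈ compositionList n k, f l =
      ∑ c ∈ univ.filter (fun c : Composition n => c.length = k), f c.blocks :=
  sum_map _ _ _

theorem sum_filter_compositionList {M : Type*} [AddCommMonoid M] (f : List ℕ → M) (n k : ℕ)
    (P : List ℕ → Prop) [DecidablePred P] :
    ∑ l ∈ (compositionList n k).filter P, f l =
      ∑ c ∈ univ.filter (fun c : Composition n => c.length = k ∧ P c.blocks), f c.blocks := by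
  rw [compositionList, filter_map, filter_filter, sum_map]
  rfl

theorem compositionList_zero_right (n : ℕ) :
    compositionList n 0 = if n = 0 then {[]} else ∅ := by
  ext l
  rw [mem_compositionList, List.length_eq_zero_iff]
  split_ifs with hn <;> aesop

theorem compositionList_one_right (n : ℕ) : compositionList (n + 1) 1 = {[n + 1]} := by
  ext l
  rw [mem_compositionList, List.length_eq_one_iff, mem_singleton]
  constructor
  · rintro ⟨⟨a, rfl⟩, h, -⟩
    simp_all
  · rintro rfl
    simp

theorem compositionList_zero_left_succ (k : ℕ) : compositionList 0 (k + 1) = ∅ := by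
  refine eq_empty_of_forall_notMem fun l hl => ?_
  obtain ⟨hlen, hsum, hpos⟩ := mem_compositionList.1 hl
  obtain ⟨a, t, rfl⟩ := List.exists_cons_of_length_eq_add_one hlen
  have := hpos a List.mem_cons_self
  simp at hsum
  omega

theorem sum_compositionList_succ {M : Type*} [AddCommMonoid M] (f : List ℕ → M) (n k : ℕ) :
    ∑ l ∈ compositionList n (k + 1), f l =
      ∑ a ∈ Icc 1 n, ∑ t ∈ compositionList (n - a) k, f (a :: t) := by
  rw [sum_sigma']
  refine (sum_nbij' (fun p : (_ : ℕ) × List ℕ => p.1 :: p.2) (fun l => ⟨l.headI, l.tail⟩)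
    ?_ ?_ (fun _ _ => rfl) ?_ fun _ _ => rfl).symm
  · rintro ⟨a, t⟩ h
    simp only [mem_sigma, mem_Icc, mem_compositionList] at h
    obtain ⟨⟨ha, han⟩, hlen, hsum, hpos⟩ := h
    simp only [mem_compositionList, List.length_cons, List.sum_cons, List.mem_cons]
    refine ⟨by omega, by omega, ?_⟩
    rintro x (rfl | hx)
    exacts [ha, hpos x hx]
  · intro l hl
    obtain ⟨hlen, hsum, hpos⟩ := mem_compositionList.1 hl
    obtain ⟨a, t, rfl⟩ := List.exists_cons_of_length_eq_add_one hlen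
    have := hpos a List.mem_cons_self
    simp only [List.sum_cons, List.length_cons, List.mem_cons] at hsum hlen hpos
    simp only [mem_sigma, mem_Icc, List.headI_cons, List.tail_cons, mem_compositionList]
    exact ⟨⟨this, by omega⟩, by omega, by omega, fun x hx => hpos x (Or.inr hx)⟩
  · intro l hl
    obtain ⟨a, t, rfl⟩ :=
      List.exists_cons_of_length_eq_add_one (mem_compositionList.1 hl).1
    rfl

theorem sum_split_first_block {M : Type*} [AddCommMonoid M] (f : List ℕ → M) (n k : ℕ) :
    ∑ a ∈ Icc 1 n, ∑ t ∈ compositionList (n - a) k, ∑ j ∈ range a, f ((j + 1) :: (a - j) :: t) =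
      ∑ b ∈ Icc 1 n, ∑ u ∈ compositionList (n + 1 - b) (k + 1), f (b :: u) := by
  simp_rw [sum_compositionList_succ]
  rw [sum_congr rfl fun a _ => sum_comm, sum_sigma' (Icc 1 n) range,
    sum_sigma' (Icc 1 n) fun b => Icc 1 (n + 1 - b)]
  refine sum_nbij' (fun p => ⟨p.2 + 1, p.1 - p.2⟩) (fun q => ⟨q.1 + q.2 - 1, q.1 - 1⟩)
    ?_ ?_ ?_ ?_ ?_ <;> rintro ⟨x, y⟩ h <;> simp only [mem_sigma, mem_Icc, mem_range] at h
  · simp only [mem_sigma, mem_Icc]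
    omega
  · simp only [mem_sigma, mem_Icc, mem_range]
    omega
  · simp only [Sigma.mk.injEq, heq_eq_eq]
    omega
  · simp only [Sigma.mk.injEq, heq_eq_eq]
    omega
  · rw [show n + 1 - (y + 1) - (x - y) = n - x by omega]

def shuffleCoeff (k : ℕ) (t : List ℕ) : ℤ := if t.getLastD 0 = 1 then k else k - 1

theorem shuffleCoeff_cons (k a : ℕ) {u : List ℕ} (hu : u ≠ []) :
    shuffleCoeff (k + 1) (a :: u) = shuffleCoeff k u + 1 := by
  obtain ⟨b, v, rfl⟩ := List.exists_cons_of_ne_nil hu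
  simp only [shuffleCoeff, List.getLastD_cons]
  split_ifs <;> push_cast <;> ring

theorem sum_zOneShuffle_compositionList (n k : ℕ) :
    ∑ s ∈ compositionList n k, zOneShuffle s =
      ∑ t ∈ compositionList (n + 1) (k + 1), shuffleCoeff (k + 1) t • zw t := by
  induction k generalizing n with
  | zero =>
    rw [compositionList_zero_right, compositionList_one_right]
    rcases n with _ | n <;> simp [shuffleCoeff, zOneShuffle]
  | succ k ih =>
    calc ∑ s ∈ compositionList n (k + 1), zOneShuffle s
        = ∑ a ∈ Icc 1 n, ∑ t ∈ compositionList (n - a) k, ∑ j ∈ range a,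
              zw ((j + 1) :: (a - j) :: t) +
            ∑ a ∈ Icc 1 n,
              mapDomain (List.cons a) (∑ t ∈ compositionList (n - a) k, zOneShuffle t) := by
          simp only [sum_compositionList_succ, zOneShuffle, sum_add_distrib, mapDomain_finsetSum]
      _ = ∑ b ∈ Icc 1 n, ∑ u ∈ compositionList (n + 1 - b) (k + 1),
            (1 + shuffleCoeff (k + 1) u) • zw (b :: u) := by
          rw [sum_split_first_block, ← sum_add_distrib]
          refine sum_congr rfl fun a ha => ?_
          rw [ih, mapDomain_finsetSum, ← Nat.sub_add_comm (mem_Icc.1 ha).2, ← sum_add_distrib]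
          refine sum_congr rfl fun u _ => ?_
          rw [zw, zw, mapDomain_smul, mapDomain_single, add_smul, one_smul]
      _ = ∑ t ∈ compositionList (n + 1) (k + 2), shuffleCoeff (k + 2) t • zw t := by
          rw [sum_compositionList_succ, sum_Icc_succ_top (by omega), Nat.sub_self,
            compositionList_zero_left_succ, sum_empty, add_zero]
          refine sum_congr rfl fun b _ => sum_congr rfl fun u hu => ?_
          have hu : u ≠ [] := by rintro rfl; simp [mem_compositionList] at hu
          rw [shuffleCoeff_cons _ _ hu, add_comm]

theorem sum_shuffleCoeff_smul {M : Type*} [AddCommGroup M] (f : List ℕ → M) (K : ℕ) {n k : ℕ}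
    (hk : k ≠ 0) :
    ∑ t ∈ compositionList n k, shuffleCoeff K t • f t =
      (K : ℤ) • ∑ t ∈ (compositionList n k).filter (·.getLastD 0 = 1), f t +
        ((K : ℤ) - 1) • ∑ t ∈ (compositionList n k).filter (2 ≤ ·.getLastD 0), f t := by
  have hlast : ∀ t ∈ compositionList n k, 1 ≤ t.getLastD 0 := by
    intro t ht
    obtain ⟨hlen, -, hpos⟩ := mem_compositionList.1 ht
    obtain ⟨u, b, rfl⟩ := List.eq_nil_or_concat t |>.resolve_left (by rintro rfl; simp_all)
    simpa using hpos b (by simp)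
  have hfilter : (compositionList n k).filter (¬·.getLastD 0 = 1) =
      (compositionList n k).filter (2 ≤ ·.getLastD 0) :=
    filter_congr fun t ht => by have := hlast t ht; omega
  rw [← sum_filter_add_sum_filter_not _ (·.getLastD 0 = 1), hfilter, Finset.smul_sum,
    Finset.smul_sum]
  congr 1 <;> refine sum_congr rfl fun t ht => ?_ <;> rw [mem_filter] at ht
  · rw [shuffleCoeff, if_pos ht.2]
  · rw [shuffleCoeff, if_neg (by omega)]

/-- For `k ≥ 2`, `n ≥ k`:
`z₁ ш (∑_{s₁+⋯+s_{k-1}=n-1, sᵢ≥1} z_{s₁,…,s_{k-1}})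
  = k ∑_{∑tᵢ=n, t_k=1} z_{t₁,…,t_k} + (k-1) ∑_{∑tᵢ=n, t_k≥2} z_{t₁,…,t_k}`. -/
theorem shuffle_z1_sum
    (sh : XWords →ₗ[ℤ] XWords →ₗ[ℤ] XWords)
    (hsunitl : ∀ w : XWords, sh (xw []) w = w)
    (hsunitr : ∀ w : XWords, sh w (xw []) = w)
    (hsrec : ∀ (a b : Bool) (u v : List Bool),
      sh (xw (a :: u)) (xw (b :: v)) =
        Finsupp.mapDomain (List.cons a) (sh (xw u) (xw (b :: v))) +
          Finsupp.mapDomain (List.cons b) (sh (xw (a :: u)) (xw v)))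
    (msh : QWords →ₗ[ℤ] QWords →ₗ[ℤ] QWords)
    (hsupp : ∀ u v : List ℕ, (∀ x ∈ u, 1 ≤ x) → (∀ x ∈ v, 1 ≤ x) →
      ∀ l ∈ (msh (zw u) (zw v)).support, ∀ x ∈ l, 1 ≤ x)
    (hcompat : ∀ u v : List ℕ, (∀ x ∈ u, 1 ≤ x) → (∀ x ∈ v, 1 ≤ x) →
      Finsupp.mapDomain encodeWord (msh (zw u) (zw v)) =
        sh (xw (encodeWord u)) (xw (encodeWord v)))
    (k n : ℕ) (hk : 2 ≤ k) (hn : k ≤ n) :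
    msh (zw [1])
        (∑ c ∈ Finset.univ.filter (fun c : Composition (n - 1) => c.length = k - 1),
          zw c.blocks)
      = (k : ℤ) • (∑ c ∈ Finset.univ.filter
            (fun c : Composition n => c.length = k ∧ c.blocks.getLastD 0 = 1),
            zw c.blocks)
        + ((k : ℤ) - 1) • (∑ c ∈ Finset.univ.filter
            (fun c : Composition n => c.length = k ∧ 2 ≤ c.blocks.getLastD 0),
            zw c.blocks) := by
  have hmsh : ∀ s : List ℕ, (∀ x ∈ s, 1 ≤ x) → msh (zw [1]) (zw s) = zOneShuffle s := by
    intro s hs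
    have hone : ∀ x ∈ [1], 1 ≤ x := by simp
    refine mapDomain_injOn _ encodeWord_injOn (hsupp [1] s hone hs)
      ((mem_supported _ _).1 (zOneShuffle_mem_supported hs)) ?_
    rw [hcompat [1] s hone hs, mapDomain_encodeWord_zOneShuffle hs]
    exact shuffle_singleton_left sh hsunitl hsunitr hsrec true (encodeWord s)
  rw [← sum_compositionList zw (n - 1) (k - 1), map_sum,
    sum_congr rfl fun s hs => hmsh s (mem_compositionList.1 hs).2.2,
    sum_zOneShuffle_compositionList, Nat.sub_add_cancel (by omega : 1 ≤ n),
    Nat.sub_add_cancel (by omega : 1 ≤ k), sum_shuffleCoeff_smul zw k (by omega),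
    sum_filter_compositionList, sum_filter_compositionList]
end

section
/- In the shuffle algebra on letters x0, x1, for integers r, s ≥ 1 with r + s = n (Euler's decomposition): (x0^{r-1} x1) ⧢ (x0^{s-1} x1) = ∑_{t1, t2 ≥ 1, t1 + t2 = n} [C(t1-1, r-1) + C(t1-1, s-1)] · x0^{t1-1} x1 x0^{t2-1} x1, where C(a,b) is the binomial coefficient. -/
open Finsupp

/-!
Both sides are computed by induction on the two exponents. Peeling the first letter off every
word of depth two, `x₀^i x₁ x₀^j x₁` with `i ≥ 1` becomes `x₀ · x₀^{i-1} x₁ x₀^j x₁` and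
`i = 0` leaves a single word starting with `x₁`; under this splitting the shuffle recursion for
`(x₀^a x₁) ⧢ (x₀^b x₁)` is exactly Pascal's rule for the coefficients
`C(i, a) + C(i, b)` of `x₀^i x₁ x₀^{a+b-i} x₁`.
-/

structure IsShuffleProduct (sh : XWords →ₗ[ℤ] XWords →ₗ[ℤ] XWords) : Prop where
  nil_left : ∀ w : XWords, sh (xw []) w = w
  nil_right : ∀ w : XWords, sh w (xw []) = w
  cons_cons : ∀ (a b : Bool) (u v : List Bool),
    sh (xw (a :: u)) (xw (b :: v)) =
      mapDomain (List.cons a) (sh (xw u) (xw (b :: v))) +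
        mapDomain (List.cons b) (sh (xw (a :: u)) (xw v))

def depthTwoWord (i j : ℕ) : List Bool :=
  List.replicate i false ++ true :: (List.replicate j false ++ [true])

noncomputable def depthTwoSum (c : ℕ → ℤ) (m : ℕ) : XWords :=
  ∑ p ∈ Finset.HasAntidiagonal.antidiagonal m, c p.1 • xw (depthTwoWord p.1 p.2)

lemma mapDomain_xw (f : List Bool → List Bool) (l : List Bool) :
    mapDomain f (xw l) = xw (f l) :=
  mapDomain_single

lemma depthTwoSum_congr {c d : ℕ → ℤ} {m : ℕ} (h : ∀ i ≤ m, c i = d i) :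
    depthTwoSum c m = depthTwoSum d m :=
  Finset.sum_congr rfl fun p hp => by
    rw [h p.1 (Finset.HasAntidiagonal.antidiagonal.fst_le hp)]

lemma depthTwoSum_add (c d : ℕ → ℤ) (m : ℕ) :
    depthTwoSum (fun i => c i + d i) m = depthTwoSum c m + depthTwoSum d m := by
  simp only [depthTwoSum, add_smul, Finset.sum_add_distrib]

lemma depthTwoSum_succ (c : ℕ → ℤ) (m : ℕ) :
    depthTwoSum c (m + 1) =
      c 0 • xw (true :: (List.replicate (m + 1) false ++ [true])) +
        mapDomain (List.cons false) (depthTwoSum (fun i => c (i + 1)) m) := by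
  rw [depthTwoSum, Finset.Nat.sum_antidiagonal_succ, depthTwoSum, mapDomain_finsetSum]
  simp only [mapDomain_smul, mapDomain_xw]
  rfl

lemma depthTwoSum_eq_sum_filter_antidiagonal (c : ℕ → ℤ) (m : ℕ) :
    depthTwoSum c m =
      ∑ p ∈ (Finset.HasAntidiagonal.antidiagonal (m + 2)).filter (fun p => 1 ≤ p.1 ∧ 1 ≤ p.2),
        c (p.1 - 1) • xw (depthTwoWord (p.1 - 1) (p.2 - 1)) := by
  rw [Finset.sum_filter, Finset.Nat.sum_antidiagonal_succ, Finset.Nat.sum_antidiagonal_succ']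
  simp [depthTwoSum]

lemma choose_succ_succ_of_le {i b : ℕ} (h : i ≤ b) : (i + 1).choose (b + 1) = i.choose b := by
  rw [Nat.choose_succ_succ', Nat.choose_eq_zero_of_lt (Nat.lt_succ_of_le h), add_zero]

namespace IsShuffleProduct

variable {sh : XWords →ₗ[ℤ] XWords →ₗ[ℤ] XWords}

lemma x0pow_shuffle_x0pow (hsh : IsShuffleProduct sh) (a b : ℕ) (u v : List Bool) :
    sh (xw (List.replicate (a + 1) false ++ u)) (xw (List.replicate (b + 1) false ++ v)) =
      mapDomain (List.cons false)
          (sh (xw (List.replicate a false ++ u)) (xw (List.replicate (b + 1) false ++ v))) +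
        mapDomain (List.cons false)
          (sh (xw (List.replicate (a + 1) false ++ u)) (xw (List.replicate b false ++ v))) :=
  hsh.cons_cons false false _ _

lemma x1_shuffle_x0pow (hsh : IsShuffleProduct sh) (b : ℕ) (v : List Bool) :
    sh (xw [true]) (xw (List.replicate (b + 1) false ++ v)) =
      xw (true :: (List.replicate (b + 1) false ++ v)) +
        mapDomain (List.cons false) (sh (xw [true]) (xw (List.replicate b false ++ v))) := by
  have h := hsh.cons_cons true false [] (List.replicate b false ++ v)
  rwa [hsh.nil_left, mapDomain_xw] at h

lemma x0pow_shuffle_x1 (hsh : IsShuffleProduct sh) (a : ℕ) (u : List Bool) :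
    sh (xw (List.replicate (a + 1) false ++ u)) (xw [true]) =
      mapDomain (List.cons false) (sh (xw (List.replicate a false ++ u)) (xw [true])) +
        xw (true :: (List.replicate (a + 1) false ++ u)) := by
  have h := hsh.cons_cons false true (List.replicate a false ++ u) []
  rwa [hsh.nil_right, mapDomain_xw] at h

theorem x0pow_x1_shuffle_x0pow_x1 (hsh : IsShuffleProduct sh) (a b : ℕ) :
    sh (xw (List.replicate a false ++ [true])) (xw (List.replicate b false ++ [true])) =
      depthTwoSum (fun i => (i.choose a + i.choose b : ℤ)) (a + b) := by
  induction a generalizing b with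
  | zero =>
    induction b with
    | zero =>
      have h := hsh.cons_cons true true [] []
      rw [hsh.nil_left, hsh.nil_right, mapDomain_xw, ← two_smul ℤ] at h
      simpa [depthTwoSum, depthTwoWord] using h
    | succ b ih =>
      simp only [List.replicate_zero, List.nil_append, Nat.zero_add] at ih ⊢
      rw [hsh.x1_shuffle_x0pow, ih, depthTwoSum_succ]
      congr 1
      · simp
      · congr 1
        refine depthTwoSum_congr fun i hi => ?_
        simp [choose_succ_succ_of_le hi]
  | succ a iha =>
    induction b with
    | zero =>
      have iha0 := iha 0
      simp only [List.replicate_zero, List.nil_append, Nat.add_zero] at iha0 ⊢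
      rw [hsh.x0pow_shuffle_x1, iha0, depthTwoSum_succ, add_comm]
      congr 1
      · simp
      · congr 1
        refine depthTwoSum_congr fun i hi => ?_
        simp [choose_succ_succ_of_le hi]
    | succ b ihb =>
      rw [hsh.x0pow_shuffle_x0pow, iha, ihb, show a + 1 + b = a + (b + 1) by omega,
        ← mapDomain_add, ← depthTwoSum_add, show a + 1 + (b + 1) = a + (b + 1) + 1 by omega,
        depthTwoSum_succ]
      simp only [Nat.choose_succ_succ', Nat.choose_zero_succ, Nat.cast_add, Nat.cast_zero,
        add_zero, zero_smul, zero_add]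
      congr 2
      funext i
      ring

end IsShuffleProduct

/-- Euler's decomposition in the shuffle algebra: for `r, s ≥ 1`
with `r + s = n`,
`(x₀^{r-1} x₁) ⧢ (x₀^{s-1} x₁)
  = ∑_{t₁+t₂=n, t₁,t₂≥1} [C(t₁-1, r-1) + C(t₁-1, s-1)] x₀^{t₁-1} x₁ x₀^{t₂-1} x₁`. -/
theorem euler_decomposition
    (sh : XWords →ₗ[ℤ] XWords →ₗ[ℤ] XWords)
    (hsunitl : ∀ w : XWords, sh (xw []) w = w)
    (hsunitr : ∀ w : XWords, sh w (xw []) = w)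
    (hsrec : ∀ (a b : Bool) (u v : List Bool),
      sh (xw (a :: u)) (xw (b :: v)) =
        Finsupp.mapDomain (List.cons a) (sh (xw u) (xw (b :: v))) +
          Finsupp.mapDomain (List.cons b) (sh (xw (a :: u)) (xw v)))
    (r s n : ℕ) (hr : 1 ≤ r) (hs : 1 ≤ s) (hrs : r + s = n) :
    sh (xw (List.replicate (r - 1) false ++ [true]))
        (xw (List.replicate (s - 1) false ++ [true]))
      = ∑ p ∈ (Finset.HasAntidiagonal.antidiagonal n).filter (fun p => 1 ≤ p.1 ∧ 1 ≤ p.2),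
          ((Nat.choose (p.1 - 1) (r - 1) + Nat.choose (p.1 - 1) (s - 1) : ℤ)) •
            xw (List.replicate (p.1 - 1) false ++ true ::
              (List.replicate (p.2 - 1) false ++ [true])) := by
  obtain ⟨a, rfl⟩ := Nat.exists_eq_add_of_le' hr
  obtain ⟨b, rfl⟩ := Nat.exists_eq_add_of_le' hs
  subst hrs
  have hsh : IsShuffleProduct sh := ⟨hsunitl, hsunitr, hsrec⟩
  simp only [Nat.add_sub_cancel]
  rw [hsh.x0pow_x1_shuffle_x0pow_x1,
    depthTwoSum_eq_sum_filter_antidiagonal, show a + 1 + (b + 1) = a + b + 2 by omega]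
  rfl
end
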